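/- arXiv:2509.20496 — 4 statements merged into one kernel-verified Lean document; each statement's English description precedes it below -/
import Mathlib

section
/- Let X be a set, H a complex Hilbert space, and K, L : X × X → L(H) positive definite kernels with K ≤ L. Suppose L admits a minimal Kolmogorov decomposition L(s,t) = V_L(s)* V_L(t) with V_L(t) : H → 𝒦_L. Then there exists a unique operator A ∈ L(𝒦_L) such that (i) 0 ≤ A ≤ I (A is positive and I − A is positive), and (ii) K(s,t) = V_L(s)* A V_L(t) for all s, t ∈ X. -/
open scoped ComplexInnerProductSpace ComplexOrder

/-- An operator-valued kernel `K : X × X → L(H)` is positive definite if for every finite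
family `(x_j, u_j)` one has `∑_{i,j} ⟪u_i, K (x_i) (x_j) u_j⟫ ≥ 0`. -/
def IsPDKernel {X H : Type*} [NormedAddCommGroup H] [InnerProductSpace ℂ H]
    (K : X → X → H →L[ℂ] H) : Prop :=
  ∀ (n : ℕ) (x : Fin n → X) (u : Fin n → H),
    0 ≤ ∑ i, ∑ j, ⟪u i, K (x i) (x j) (u j)⟫

/-!
On formal finite combinations `f` of pairs `(t, h) ∈ X × H`, a positive definite kernel `M`
induces a positive semidefinite Gram form `⟪f, g⟫_M`. Writing `π (t, h) = V t h`, the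
decomposition of `L` gives `⟪f, f⟫_L = ‖π f‖²`, so `0 ≤ ⟪f, f⟫_K ≤ ‖π f‖²` and, by
Cauchy–Schwarz, `|⟪f, g⟫_K| ≤ ‖π f‖ ‖π g‖`. Hence the `K`-form factors through `π` as a bounded
sesquilinear form on the dense subspace `range π`, extends to `𝒦`, and is represented by an
operator `A`. The inequalities `0 ≤ A ≤ 1` pass from `range π` to `𝒦` by continuity, and `A` is
unique because the coefficients `⟪V s h, A (V t k)⟫ = ⟪h, K s t k⟫` determine it on a set with
dense span.
-/

open ComplexConjugate

section Extension

variable {𝕜 W E G : Type*} [NontriviallyNormedField 𝕜] [AddCommGroup W] [Module 𝕜 W]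
  [NormedAddCommGroup E] [NormedSpace 𝕜 E] [NormedAddCommGroup G] [NormedSpace 𝕜 G]
  [CompleteSpace G]

theorem LinearMap.exists_extend₂_of_norm_le {σ : 𝕜 →+* 𝕜} [RingHomIsometric σ]
    (B : W →ₛₗ[σ] W →ₗ[𝕜] G) (π : W →ₗ[𝕜] E) (hπ : DenseRange π)
    {C : ℝ} (hC : 0 ≤ C) (hB : ∀ f g, ‖B f g‖ ≤ C * ‖π f‖ * ‖π g‖) :
    ∃ B' : E →SL[σ] E →L[𝕜] G, ∀ f g, B' (π f) (π g) = B f g := by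
  have hBf (f : W) : ∃ c, ∀ g, ‖B f g‖ ≤ c * ‖π g‖ := ⟨C * ‖π f‖, hB f⟩
  have ext_unique (f : W) (T : E →L[𝕜] G) (hT : ∀ g, T (π g) = B f g) :
      (B f).extendOfNorm π = T :=
    LinearMap.extendOfNorm_unique hπ _ (hB f) T (LinearMap.ext hT)
  let Φ : W →ₛₗ[σ] E →L[𝕜] G :=
    { toFun f := (B f).extendOfNorm π
      map_add' f f' := ext_unique _ _ fun g => by
        simp [LinearMap.extendOfNorm_eq hπ (hBf _)]
      map_smul' c f := ext_unique _ _ fun g => by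
        simp [LinearMap.extendOfNorm_eq hπ (hBf _)] }
  have hΦ (f : W) : ‖Φ f‖ ≤ C * ‖π f‖ :=
    LinearMap.opNorm_extendOfNorm_le hπ (by positivity) (hB f)
  refine ⟨Φ.extendOfNorm π, fun f g => ?_⟩
  rw [LinearMap.extendOfNorm_eq hπ ⟨C, hΦ⟩]
  exact LinearMap.extendOfNorm_eq hπ (hBf f) g

end Extension

theorem ContinuousLinearMap.ext_inner_of_dense_span {𝕜 E : Type*} [RCLike 𝕜]
    [NormedAddCommGroup E] [InnerProductSpace 𝕜 E] {S : Set E}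
    (hS : Dense (Submodule.span 𝕜 S : Set E)) {A B : E →L[𝕜] E}
    (h : ∀ x ∈ S, ∀ y ∈ S, inner 𝕜 x (A y) = inner 𝕜 x (B y)) : A = B := by
  refine ContinuousLinearMap.ext_on hS fun y hy => ext_inner_right 𝕜 fun x => ?_
  have : innerSL 𝕜 (A y) = innerSL 𝕜 (B y) := ContinuousLinearMap.ext_on hS fun x hx => by
    simp only [innerSL_apply_apply]
    rw [← inner_conj_symm, h x hx y hy, inner_conj_symm]
  exact congr($this x)

section KernelForm

variable {X H : Type*} [NormedAddCommGroup H] [InnerProductSpace ℂ H]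

namespace IsPDKernel

variable {M : X → X → H →L[ℂ] H}

theorem inner_apply_self_nonneg (hM : IsPDKernel M) (x : X) (u : H) : 0 ≤ ⟪u, M x x u⟫ := by
  simpa using hM 1 ![x] ![u]

theorem conj_inner_apply (hM : IsPDKernel M) (s t : X) (u v : H) :
    conj ⟪u, M s t v⟫ = ⟪v, M t s u⟫ := by
  -- testing the `2 × 2` positivity against `(u, v)` and `(u, I • v)` shows that both
  -- `z + w` and `I * (z - w)` are real, where `z = ⟪u, M s t v⟫` and `w = ⟪v, M t s u⟫`
  have im_add (v : H) : (⟪u, M s t v⟫ + ⟪v, M t s u⟫).im = 0 := by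
    have h := hM 2 ![s, t] ![u, v]
    simp only [Fin.sum_univ_two, Matrix.cons_val_zero, Matrix.cons_val_one] at h
    have hs := (Complex.nonneg_iff.1 (hM.inner_apply_self_nonneg s u)).2
    have ht := (Complex.nonneg_iff.1 (hM.inner_apply_self_nonneg t v)).2
    have := (Complex.nonneg_iff.1 h).2
    simp only [Complex.add_im] at hs ht this ⊢
    linarith
  have h₁ := im_add v
  have h₂ := im_add (Complex.I • v)
  rw [map_smul, inner_smul_right, inner_smul_left] at h₂
  simp only [Complex.add_im, Complex.mul_im, Complex.conj_re, Complex.conj_im,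
    Complex.I_re, Complex.I_im] at h₁ h₂
  apply Complex.ext <;> simp only [Complex.conj_re, Complex.conj_im] <;> linarith

end IsPDKernel

noncomputable def kernelForm (M : X → X → H →L[ℂ] H) :
    ((X × H) →₀ ℂ) →ₗ⋆[ℂ] ((X × H) →₀ ℂ) →ₗ[ℂ] ℂ :=
  LinearMap.mk₂'ₛₗ _ _
    (fun f g => f.sum fun p a => g.sum fun q b => conj a * b * ⟪p.2, M p.1 q.1 q.2⟫)
    (fun f f' g => Finsupp.sum_add_index' (by simp) fun p a a' => by
      rw [← Finsupp.sum_add]; congr 1; ext q b; simp only [map_add]; ring)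
    (fun c f g => by
      rw [Finsupp.sum_smul_index' (by simp), smul_eq_mul, Finsupp.mul_sum]
      congr 1; ext p a
      rw [Finsupp.mul_sum]; congr 1; ext q b
      simp only [smul_eq_mul, map_mul]; ring)
    (fun f g g' => by
      rw [← Finsupp.sum_add]; congr 1; ext p a
      exact Finsupp.sum_add_index' (by simp) fun q b b' => by ring)
    (fun c f g => by
      rw [RingHom.id_apply, smul_eq_mul, Finsupp.mul_sum]; congr 1; ext p a
      rw [Finsupp.sum_smul_index' (by simp), Finsupp.mul_sum]; congr 1; ext q b
      simp only [smul_eq_mul]; ring)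

theorem kernelForm_apply (M : X → X → H →L[ℂ] H) (f g : (X × H) →₀ ℂ) :
    kernelForm M f g = f.sum fun p a => g.sum fun q b => conj a * b * ⟪p.2, M p.1 q.1 q.2⟫ :=
  rfl

theorem kernelForm_single_single (M : X → X → H →L[ℂ] H) (p q : X × H) :
    kernelForm M (.single p 1) (.single q 1) = ⟪p.2, M p.1 q.1 q.2⟫ := by
  simp [kernelForm_apply]

theorem kernelForm_sub (M N : X → X → H →L[ℂ] H) (f g : (X × H) →₀ ℂ) :
    kernelForm (fun s t => M s t - N s t) f g = kernelForm M f g - kernelForm N f g := by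
  simp only [kernelForm_apply, ← Finsupp.sum_sub, sub_apply, inner_sub_right, mul_sub]

namespace IsPDKernel

variable {M : X → X → H →L[ℂ] H}

theorem kernelForm_self_nonneg (hM : IsPDKernel M) (f : (X × H) →₀ ℂ) :
    0 ≤ kernelForm M f f := by
  let e := f.support.equivFin.symm
  convert hM _ (fun i => (e i : X × H).1) (fun i => f (e i) • (e i : X × H).2) using 1
  simp only [kernelForm_apply, Finsupp.sum, map_smul, inner_smul_left, inner_smul_right]
  rw [← Finset.sum_coe_sort f.support, ← e.sum_comp]
  refine Fintype.sum_congr _ _ fun i => ?_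
  rw [← Finset.sum_coe_sort f.support, ← e.sum_comp]
  exact Fintype.sum_congr _ _ fun j => by ring

theorem conj_kernelForm (hM : IsPDKernel M) (f g : (X × H) →₀ ℂ) :
    conj (kernelForm M f g) = kernelForm M g f := by
  simp only [kernelForm_apply, Finsupp.sum, map_sum, map_mul, Complex.conj_conj,
    hM.conj_inner_apply]
  rw [Finset.sum_comm]
  exact Finset.sum_congr rfl fun q _ => Finset.sum_congr rfl fun p _ => by ring

noncomputable abbrev preInnerProductSpaceCore (hM : IsPDKernel M) :
    PreInnerProductSpace.Core ℂ ((X × H) →₀ ℂ) where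
  inner f g := kernelForm M f g
  conj_inner_symm f g := hM.conj_kernelForm g f
  re_inner_nonneg f := (Complex.nonneg_iff.1 (hM.kernelForm_self_nonneg f)).1
  add_left f f' g := by simp
  smul_left f g c := by simp

theorem norm_kernelForm_sq_le (hM : IsPDKernel M) (f g : (X × H) →₀ ℂ) :
    ‖kernelForm M f g‖ ^ 2 ≤ (kernelForm M f f).re * (kernelForm M g g).re := by
  have := @InnerProductSpace.Core.inner_mul_inner_self_le ℂ _ _ _ _
    hM.preInnerProductSpaceCore f g
  rwa [@InnerProductSpace.Core.norm_inner_symm ℂ _ _ _ _ hM.preInnerProductSpaceCore g f,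
    ← sq] at this

end IsPDKernel

section Kolmogorov

variable {𝒦 : Type*} [NormedAddCommGroup 𝒦] [InnerProductSpace ℂ 𝒦]

noncomputable def kolmogorovMap (V : X → H →L[ℂ] 𝒦) : ((X × H) →₀ ℂ) →ₗ[ℂ] 𝒦 :=
  Finsupp.linearCombination ℂ fun p => V p.1 p.2

theorem kolmogorovMap_single (V : X → H →L[ℂ] 𝒦) (p : X × H) :
    kolmogorovMap V (.single p 1) = V p.1 p.2 := by
  simp [kolmogorovMap]

theorem denseRange_kolmogorovMap {V : X → H →L[ℂ] 𝒦}
    (hV : Dense (Submodule.span ℂ {y : 𝒦 | ∃ t h, V t h = y} : Set 𝒦)) :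
    DenseRange (kolmogorovMap V) := by
  have : {y : 𝒦 | ∃ t h, V t h = y} = Set.range fun p : X × H => V p.1 p.2 := by
    ext; simp
  rwa [DenseRange, ← LinearMap.coe_range, kolmogorovMap, Finsupp.range_linearCombination,
    ← this]

variable [CompleteSpace H] [CompleteSpace 𝒦]

theorem kernelForm_eq_inner {L : X → X → H →L[ℂ] H} {V : X → H →L[ℂ] 𝒦}
    (hdec : ∀ s t, L s t = ContinuousLinearMap.adjoint (V s) ∘L V t) (f g : (X × H) →₀ ℂ) :
    kernelForm L f g = ⟪kolmogorovMap V f, kolmogorovMap V g⟫ := by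
  simp only [kernelForm_apply, kolmogorovMap, Finsupp.linearCombination_apply, Finsupp.sum,
    sum_inner, inner_sum, inner_smul_left, inner_smul_right, hdec,
    ContinuousLinearMap.comp_apply, ContinuousLinearMap.adjoint_inner_right, Finset.mul_sum]
  rw [Finset.sum_comm]
  exact Finset.sum_congr rfl fun p _ => Finset.sum_congr rfl fun q _ => by ring

theorem eq_adjoint_comp_comp_iff (K : X → X → H →L[ℂ] H) (V : X → H →L[ℂ] 𝒦)
    (A : 𝒦 →L[ℂ] 𝒦) :
    (∀ s t, K s t = ContinuousLinearMap.adjoint (V s) ∘L (A ∘L V t)) ↔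
      ∀ s t h k, ⟪V s h, A (V t k)⟫ = ⟪h, K s t k⟫ := by
  refine forall₂_congr fun s t => ContinuousLinearMap.ext_iff.trans ?_
  simp only [ContinuousLinearMap.comp_apply]
  refine ⟨fun hst h k => ?_, fun hst k => ext_inner_left ℂ fun h => ?_⟩
  · rw [hst k, ContinuousLinearMap.adjoint_inner_right]
  · rw [ContinuousLinearMap.adjoint_inner_right, hst]

variable {K L : X → X → H →L[ℂ] H} {V : X → H →L[ℂ] 𝒦}

theorem norm_kernelForm_le (hK : IsPDKernel K) (hKL : IsPDKernel fun s t => L s t - K s t)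
    (hdec : ∀ s t, L s t = ContinuousLinearMap.adjoint (V s) ∘L V t) (f g : (X × H) →₀ ℂ) :
    ‖kernelForm K f g‖ ≤ ‖kolmogorovMap V f‖ * ‖kolmogorovMap V g‖ := by
  have re_le (f : (X × H) →₀ ℂ) : (kernelForm K f f).re ≤ ‖kolmogorovMap V f‖ ^ 2 := by
    have := (Complex.nonneg_iff.1 (hKL.kernelForm_self_nonneg f)).1
    rw [kernelForm_sub, Complex.sub_re, kernelForm_eq_inner hdec, inner_self_eq_norm_sq_to_K]
      at this
    simpa [← Complex.ofReal_pow] using this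
  refine (pow_le_pow_iff_left₀ (by positivity) (by positivity) two_ne_zero).1 ?_
  calc ‖kernelForm K f g‖ ^ 2 ≤ (kernelForm K f f).re * (kernelForm K g g).re :=
        hK.norm_kernelForm_sq_le f g
    _ ≤ ‖kolmogorovMap V f‖ ^ 2 * ‖kolmogorovMap V g‖ ^ 2 :=
        mul_le_mul (re_le f) (re_le g) (Complex.nonneg_iff.1 (hK.kernelForm_self_nonneg g)).1
          (by positivity)
    _ = (‖kolmogorovMap V f‖ * ‖kolmogorovMap V g‖) ^ 2 := by ring

theorem exists_inner_kolmogorovMap_eq_kernelForm (hK : IsPDKernel K)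
    (hKL : IsPDKernel fun s t => L s t - K s t)
    (hdec : ∀ s t, L s t = ContinuousLinearMap.adjoint (V s) ∘L V t)
    (hV : DenseRange (kolmogorovMap V)) :
    ∃ A : 𝒦 →L[ℂ] 𝒦, ∀ f g, ⟪kolmogorovMap V f, A (kolmogorovMap V g)⟫ = kernelForm K f g := by
  obtain ⟨B, hB⟩ := (kernelForm K).exists_extend₂_of_norm_le _ hV zero_le_one fun f g => by
    simpa only [one_mul] using norm_kernelForm_le hK hKL hdec f g
  refine ⟨InnerProductSpace.continuousLinearMapOfBilin B, fun f g => ?_⟩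
  rw [← inner_conj_symm, InnerProductSpace.continuousLinearMapOfBilin_apply, hB,
    hK.conj_kernelForm]

end Kolmogorov

end KernelForm

theorem stmt6_general {X H 𝒦 : Type*} [NormedAddCommGroup H] [InnerProductSpace ℂ H] [CompleteSpace H]
    [NormedAddCommGroup 𝒦] [InnerProductSpace ℂ 𝒦] [CompleteSpace 𝒦]
    (K L : X → X → H →L[ℂ] H) (hK : IsPDKernel K)
    (hKL : IsPDKernel (fun s t => L s t - K s t))
    (V : X → H →L[ℂ] 𝒦)
    (hdec : ∀ s t, L s t = ContinuousLinearMap.adjoint (V s) ∘L V t)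
    (hmin : Dense (Submodule.span ℂ {y : 𝒦 | ∃ t h, V t h = y} : Set 𝒦)) :
    ∃! A : 𝒦 →L[ℂ] 𝒦,
      (∀ x : 𝒦, 0 ≤ ⟪x, A x⟫) ∧ (∀ x : 𝒦, 0 ≤ ⟪x, ((1 : 𝒦 →L[ℂ] 𝒦) - A) x⟫) ∧
      ∀ s t, K s t = ContinuousLinearMap.adjoint (V s) ∘L (A ∘L V t) := by
  have hV := denseRange_kolmogorovMap hmin
  obtain ⟨A, hA⟩ := exists_inner_kolmogorovMap_eq_kernelForm hK hKL hdec hV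
  have isClosed_nonneg (B : 𝒦 →L[ℂ] 𝒦) : IsClosed {x | 0 ≤ ⟪x, B x⟫} :=
    isClosed_le continuous_const (by fun_prop)
  have inner_eq : ∀ s t h k, ⟪V s h, A (V t k)⟫ = ⟪h, K s t k⟫ := fun s t h k => by
    simpa only [kolmogorovMap_single, kernelForm_single_single]
      using hA (.single (s, h) 1) (.single (t, k) 1)
  have nonneg : ∀ x, 0 ≤ ⟪x, A x⟫ := fun x => hV.induction_on x (isClosed_nonneg A) fun f =>
    hA f f ▸ hK.kernelForm_self_nonneg f
  have nonneg_one_sub : ∀ x, 0 ≤ ⟪x, (1 - A) x⟫ := fun x =>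
    hV.induction_on x (isClosed_nonneg _) fun f => by
      rw [sub_apply, one_apply_eq_self, inner_sub_right, hA, ← kernelForm_eq_inner hdec,
        ← kernelForm_sub]
      exact hKL.kernelForm_self_nonneg f
  refine ⟨A, ⟨nonneg, nonneg_one_sub, (eq_adjoint_comp_comp_iff K V A).2 inner_eq⟩,
    fun A' ⟨_, _, hA'⟩ => ContinuousLinearMap.ext_inner_of_dense_span hmin ?_⟩
  rintro - ⟨s, h, rfl⟩ - ⟨t, k, rfl⟩
  rw [(eq_adjoint_comp_comp_iff K V A').1 hA', inner_eq]

/-- Radon–Nikodym derivative for kernels. If `K ≤ L` are positive definite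
kernels and `L(s,t) = V_L(s)* V_L(t)` is a minimal Kolmogorov decomposition, then there is a
unique operator `A` with `0 ≤ A ≤ I` and `K(s,t) = V_L(s)* A V_L(t)` for all `s, t`. -/
theorem stmt6 {X H 𝒦 : Type*} [NormedAddCommGroup H] [InnerProductSpace ℂ H] [CompleteSpace H]
    [NormedAddCommGroup 𝒦] [InnerProductSpace ℂ 𝒦] [CompleteSpace 𝒦]
    (K L : X → X → H →L[ℂ] H) (hK : IsPDKernel K) (hL : IsPDKernel L)
    (hKL : IsPDKernel (fun s t => L s t - K s t))
    (V : X → H →L[ℂ] 𝒦)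
    (hdec : ∀ s t, L s t = ContinuousLinearMap.adjoint (V s) ∘L V t)
    (hmin : Dense (Submodule.span ℂ {y : 𝒦 | ∃ t h, V t h = y} : Set 𝒦)) :
    ∃! A : 𝒦 →L[ℂ] 𝒦,
      (∀ x : 𝒦, 0 ≤ ⟪x, A x⟫) ∧ (∀ x : 𝒦, 0 ≤ ⟪x, ((1 : 𝒦 →L[ℂ] 𝒦) - A) x⟫) ∧
      ∀ s t, K s t = ContinuousLinearMap.adjoint (V s) ∘L (A ∘L V t) :=
  stmt6_general K L hK hKL V hdec hmin
end

section
/- Let X be a set, H a complex Hilbert space, and K, L : X × X → L(H) positive definite kernels with K ≤ L. Suppose L admits a minimal Kolmogorov decomposition L(s,t) = V_L(s)* V_L(t) with V_L(t) : H → 𝒦_L, and let K(s,t) = V_K(s)* V_K(t) be any Kolmogorov decomposition of K with V_K(t) : H → 𝒦_K. Then there exists a unique bounded operator W : 𝒦_L → 𝒦_K with ‖W‖ ≤ 1 such that W V_L(t) h = V_K(t) h for all t ∈ X and h ∈ H; moreover K(s,t) = V_L(s)* (W* W) V_L(t) for all s, t ∈ X. -/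
/-!
Positivity of `L - K`, read through the two Kolmogorov decompositions, says exactly that
`‖∑ V_K(tᵢ) hᵢ‖ ≤ ‖∑ V_L(tᵢ) hᵢ‖` for all finite sums. Hence `V_L(t) h ↦ V_K(t) h` is a
well-defined contraction on the span of the `V_L(t) H`, which is dense by minimality, and `W` is
its continuous extension (`LinearMap.extendOfNorm` applied to the two linear-combination maps
out of `X × H →₀ ℂ`). It is unique by density, and `W ∘ V_L(t) = V_K(t)` turns
`K(s,t) = V_K(s)* V_K(t)` into `V_L(s)* W* W V_L(t)`.
-/

open scoped ComplexInnerProductSpace ComplexOrder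

open ContinuousLinearMap

section

variable {X H : Type*} [NormedAddCommGroup H] [InnerProductSpace ℂ H]

theorem IsPDKernel.finset_sum_nonneg {K : X → X → H →L[ℂ] H} (hK : IsPDKernel K) {ι : Type*}
    (s : Finset ι) (x : ι → X) (u : ι → H) :
    0 ≤ ∑ i ∈ s, ∑ j ∈ s, ⟪u i, K (x i) (x j) (u j)⟫ := by
  let e := s.equivFin.symm
  convert hK s.card (fun k => x (e k)) (fun k => u (e k)) using 1
  rw [← Finset.sum_coe_sort s, ← e.sum_comp]
  refine Finset.sum_congr rfl fun k _ => ?_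
  rw [← Finset.sum_coe_sort s, ← e.sum_comp]

variable [CompleteSpace H] {E F : Type*} [NormedAddCommGroup E] [InnerProductSpace ℂ E]
  [CompleteSpace E] [NormedAddCommGroup F] [InnerProductSpace ℂ F] [CompleteSpace F]

theorem finset_sum_inner_adjoint_comp_apply (V : X → H →L[ℂ] E) {ι : Type*}
    (s : Finset ι) (x : ι → X) (u : ι → H) :
    ∑ i ∈ s, ∑ j ∈ s, ⟪u i, (adjoint (V (x i)) ∘L V (x j)) (u j)⟫ =
      (‖∑ i ∈ s, V (x i) (u i)‖ : ℂ) ^ 2 := by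
  simp only [comp_apply, adjoint_inner_right, ← inner_sum, ← sum_inner,
    inner_self_eq_norm_sq_to_K]
  rfl

theorem norm_finset_sum_le_of_isPDKernel_sub {K L : X → X → H →L[ℂ] H}
    (hKL : IsPDKernel (fun s t => L s t - K s t)) {VL : X → H →L[ℂ] E} {VK : X → H →L[ℂ] F}
    (hdecL : ∀ s t, L s t = adjoint (VL s) ∘L VL t)
    (hdecK : ∀ s t, K s t = adjoint (VK s) ∘L VK t) {ι : Type*}
    (s : Finset ι) (x : ι → X) (u : ι → H) :
    ‖∑ i ∈ s, VK (x i) (u i)‖ ≤ ‖∑ i ∈ s, VL (x i) (u i)‖ := by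
  have h := hKL.finset_sum_nonneg s x u
  simp only [sub_apply, inner_sub_right, Finset.sum_sub_distrib, hdecL, hdecK,
    finset_sum_inner_adjoint_comp_apply, sub_nonneg] at h
  exact (pow_le_pow_iff_left₀ (norm_nonneg _) (norm_nonneg _) two_ne_zero).mp (mod_cast h)

end

theorem stmt7_general {X H 𝒦L 𝒦K : Type*} [NormedAddCommGroup H] [InnerProductSpace ℂ H]
    [CompleteSpace H] [NormedAddCommGroup 𝒦L] [InnerProductSpace ℂ 𝒦L] [CompleteSpace 𝒦L]
    [NormedAddCommGroup 𝒦K] [InnerProductSpace ℂ 𝒦K] [CompleteSpace 𝒦K]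
    (K L : X → X → H →L[ℂ] H)
    (hKL : IsPDKernel (fun s t => L s t - K s t))
    (VL : X → H →L[ℂ] 𝒦L) (VK : X → H →L[ℂ] 𝒦K)
    (hdecL : ∀ s t, L s t = ContinuousLinearMap.adjoint (VL s) ∘L VL t)
    (hminL : Dense (Submodule.span ℂ {y : 𝒦L | ∃ t h, VL t h = y} : Set 𝒦L))
    (hdecK : ∀ s t, K s t = ContinuousLinearMap.adjoint (VK s) ∘L VK t) :
    ∃! W : 𝒦L →L[ℂ] 𝒦K,
      ‖W‖ ≤ 1 ∧ (∀ (t : X) (h : H), W (VL t h) = VK t h) ∧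
      ∀ s t, K s t = ContinuousLinearMap.adjoint (VL s) ∘L
        ((ContinuousLinearMap.adjoint W ∘L W) ∘L VL t) := by
  let vL : X × H → 𝒦L := fun p => VL p.1 p.2
  let vK : X × H → 𝒦K := fun p => VK p.1 p.2
  have hdense : DenseRange (Finsupp.linearCombination ℂ vL) := by
    rw [DenseRange, ← LinearMap.coe_range, Finsupp.range_linearCombination]
    convert hminL
    ext y
    simp [vL]
  have hnorm : ∀ c, ‖Finsupp.linearCombination ℂ vK c‖ ≤
      1 * ‖Finsupp.linearCombination ℂ vL c‖ := fun c => by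
    simpa only [Finsupp.linearCombination_apply, Finsupp.sum, one_mul, map_smul] using
      norm_finset_sum_le_of_isPDKernel_sub hKL hdecL hdecK c.support Prod.fst (fun p => c p • p.2)
  let W := (Finsupp.linearCombination ℂ vK).extendOfNorm (Finsupp.linearCombination ℂ vL)
  have hWV : ∀ t h, W (VL t h) = VK t h := fun t h => by
    simpa [vL, vK] using LinearMap.extendOfNorm_eq hdense ⟨1, hnorm⟩ (Finsupp.single (t, h) 1)
  have hWVL : ∀ t, W ∘L VL t = VK t := fun t => ext (hWV t)
  refine ⟨W, ⟨LinearMap.opNorm_extendOfNorm_le hdense zero_le_one hnorm, hWV, fun s t => ?_⟩, ?_⟩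
  · rw [hdecK, comp_assoc, hWVL, ← comp_assoc, ← adjoint_comp, hWVL]
  · rintro W' ⟨-, hW'V, -⟩
    refine ext_on hminL ?_
    rintro _ ⟨t, h, rfl⟩
    rw [hW'V, hWV]

/-- If `K ≤ L` are positive definite kernels, `L(s,t) = V_L(s)* V_L(t)` is a
minimal Kolmogorov decomposition and `K(s,t) = V_K(s)* V_K(t)` is any Kolmogorov decomposition
of `K`, then there is a unique bounded operator `W : 𝒦_L → 𝒦_K` with `‖W‖ ≤ 1` and
`W V_L(t) h = V_K(t) h`; moreover `K(s,t) = V_L(s)* (W* W) V_L(t)`. -/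
theorem stmt7 {X H 𝒦L 𝒦K : Type*} [NormedAddCommGroup H] [InnerProductSpace ℂ H]
    [CompleteSpace H] [NormedAddCommGroup 𝒦L] [InnerProductSpace ℂ 𝒦L] [CompleteSpace 𝒦L]
    [NormedAddCommGroup 𝒦K] [InnerProductSpace ℂ 𝒦K] [CompleteSpace 𝒦K]
    (K L : X → X → H →L[ℂ] H) (hK : IsPDKernel K) (hL : IsPDKernel L)
    (hKL : IsPDKernel (fun s t => L s t - K s t))
    (VL : X → H →L[ℂ] 𝒦L) (VK : X → H →L[ℂ] 𝒦K)
    (hdecL : ∀ s t, L s t = ContinuousLinearMap.adjoint (VL s) ∘L VL t)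
    (hminL : Dense (Submodule.span ℂ {y : 𝒦L | ∃ t h, VL t h = y} : Set 𝒦L))
    (hdecK : ∀ s t, K s t = ContinuousLinearMap.adjoint (VK s) ∘L VK t) :
    ∃! W : 𝒦L →L[ℂ] 𝒦K,
      ‖W‖ ≤ 1 ∧ (∀ (t : X) (h : H), W (VL t h) = VK t h) ∧
      ∀ s t, K s t = ContinuousLinearMap.adjoint (VL s) ∘L
        ((ContinuousLinearMap.adjoint W ∘L W) ∘L VL t) :=
  stmt7_general K L hKL VL VK hdecL hminL hdecK
end

section
/- Let d ≥ 1, H a complex Hilbert space, and K : F_d^+ × F_d^+ → L(H) a positive definite kernel with minimal Kolmogorov decomposition K(α, β) = V(α)* V(β), V(α) : H → 𝒦. The following are equivalent: (1) K_Σ ≤ K, i.e. K − K_Σ is positive definite; (2) for every finite family (α_j, u_j)_{j=1}^N in F_d^+ × H, Σ_{i=1}^d ‖Σ_{j=1}^N V(α_j i) u_j‖² ≤ ‖Σ_{j=1}^N V(α_j) u_j‖²; (3) there exist bounded operators B_1, …, B_d ∈ L(𝒦) with B_i V(α) u = V(α i) u for all α ∈ F_d^+, u ∈ H, and Σ_{i=1}^d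 B_i* B_i ≤ I in the Loewner order. -/
open scoped ComplexInnerProductSpace ComplexOrder

/-!
Through the Kolmogorov decomposition, the quadratic form of `K - K_Σ` at a family `(α_j, u_j)`
equals `‖∑ V(α_j) u_j‖² - ∑_i ‖∑ V(α_j i) u_j‖²`, which gives (1) ⇔ (2). By (2),
`∑ V(α_j) u_j = 0` forces `∑ V(α_j i) u_j = 0`, so `B_i : ∑ V(α_j) u_j ↦ ∑ V(α_j i) u_j` is a
well-defined map with `∑_i ‖B_i x‖² ≤ ‖x‖²` on the span of the `V(α) u`. That span is dense by
minimality, so the `B_i` extend by continuity to `𝒦`, and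
`⟪x, (1 - ∑ B_i* B_i) x⟫ = ‖x‖² - ∑_i ‖B_i x‖²` gives (2) ⇔ (3).
-/

theorem Finsupp.exists_fin_sum_eq {α M E : Type*} [Zero M] [AddCommMonoid E] (f : α →₀ M) :
    ∃ (N : ℕ) (a : Fin N → α) (u : Fin N → M),
      ∀ g : α → M → E, f.sum g = ∑ j, g (a j) (u j) := by
  let e := f.support.equivFin
  refine ⟨f.support.card, fun j => e.symm j, fun j => f (e.symm j), fun g => ?_⟩
  rw [Finsupp.sum, ← Finset.sum_coe_sort, ← e.symm.sum_comp]

section DenseRangeFactorization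

variable {𝕜 M E F ι : Type*} [NontriviallyNormedField 𝕜] [AddCommGroup M] [Module 𝕜 M]
  [NormedAddCommGroup E] [NormedSpace 𝕜 E] [NormedAddCommGroup F] [NormedSpace 𝕜 F]
  [CompleteSpace F] [Fintype ι]

theorem exists_sum_norm_sq_le_of_denseRange (A : M →ₗ[𝕜] E) (hA : DenseRange A)
    (C : ι → M →ₗ[𝕜] F) (hC : ∀ m, ∑ i, ‖C i m‖ ^ 2 ≤ ‖A m‖ ^ 2) :
    ∃ B : ι → E →L[𝕜] F, (∀ i m, B i (A m) = C i m) ∧ ∀ x, ∑ i, ‖B i x‖ ^ 2 ≤ ‖x‖ ^ 2 := by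
  have hbound : ∀ i m, ‖C i m‖ ≤ 1 * ‖A m‖ := fun i m => by
    rw [one_mul, ← pow_le_pow_iff_left₀ (norm_nonneg _) (norm_nonneg _) two_ne_zero]
    exact (Finset.single_le_sum (fun j _ => by positivity) (Finset.mem_univ i)).trans (hC m)
  have hBA : ∀ i m, (C i).extendOfNorm A (A m) = C i m := fun i =>
    LinearMap.extendOfNorm_eq hA ⟨1, hbound i⟩
  refine ⟨fun i => (C i).extendOfNorm A, hBA, fun x => ?_⟩
  induction x using hA.induction_on with
  | hp => exact isClosed_le (by fun_prop) (by fun_prop)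
  | ih m => simpa only [hBA] using hC m

end DenseRangeFactorization

section Kolmogorov

variable {X H 𝒦 : Type*} [NormedAddCommGroup H] [InnerProductSpace ℂ H] [CompleteSpace H]
  [NormedAddCommGroup 𝒦] [InnerProductSpace ℂ 𝒦] [CompleteSpace 𝒦]

theorem sum_inner_adjoint_comp_eq_norm_sq (W : X → H →L[ℂ] 𝒦) {N : ℕ} (x : Fin N → X)
    (u : Fin N → H) :
    ∑ j, ∑ k, ⟪u j, (ContinuousLinearMap.adjoint (W (x j)) ∘L W (x k)) (u k)⟫
      = ((‖∑ j, W (x j) (u j)‖ ^ 2 : ℝ) : ℂ) := by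
  simp only [ContinuousLinearMap.comp_apply, ContinuousLinearMap.adjoint_inner_right,
    ← inner_sum, ← sum_inner]
  rw [inner_self_eq_norm_sq_to_K]
  norm_cast

theorem inner_one_sub_sum_adjoint_comp_self {ι : Type*} (s : Finset ι) (B : ι → 𝒦 →L[ℂ] 𝒦)
    (x : 𝒦) :
    ⟪x, ((1 : 𝒦 →L[ℂ] 𝒦) - ∑ i ∈ s, ContinuousLinearMap.adjoint (B i) ∘L B i) x⟫
      = ((‖x‖ ^ 2 - ∑ i ∈ s, ‖B i x‖ ^ 2 : ℝ) : ℂ) := by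
  simp only [sub_apply, one_apply_eq_self, sum_apply, ContinuousLinearMap.comp_apply,
    inner_sub_right, inner_sum, ContinuousLinearMap.adjoint_inner_right,
    inner_self_eq_norm_sq_to_K]
  push_cast
  rfl

end Kolmogorov

section ShiftedKernel

variable {d : ℕ} {H 𝒦 : Type*} [NormedAddCommGroup H] [InnerProductSpace ℂ H]
  [NormedAddCommGroup 𝒦] [InnerProductSpace ℂ 𝒦] [CompleteSpace 𝒦]
  {K : List (Fin d) → List (Fin d) → H →L[ℂ] H} {V : List (Fin d) → H →L[ℂ] 𝒦}

theorem exists_shift_operators_of_sum_norm_sq_le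
    (hmin : Dense (Submodule.span ℂ {y : 𝒦 | ∃ α h, V α h = y} : Set 𝒦))
    (hV : ∀ (N : ℕ) (α : Fin N → List (Fin d)) (u : Fin N → H),
      ∑ i : Fin d, ‖∑ j, V (α j ++ [i]) (u j)‖ ^ 2 ≤ ‖∑ j, V (α j) (u j)‖ ^ 2) :
    ∃ B : Fin d → 𝒦 →L[ℂ] 𝒦,
      (∀ (i : Fin d) (α : List (Fin d)) (u : H), B i (V α u) = V (α ++ [i]) u) ∧
      ∀ x : 𝒦, 0 ≤ ⟪x, ((1 : 𝒦 →L[ℂ] 𝒦) - ∑ i, ContinuousLinearMap.adjoint (B i) ∘L B i) x⟫ := by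
  let A : (List (Fin d) →₀ H) →ₗ[ℂ] 𝒦 := Finsupp.lsum ℂ fun α => (V α : H →ₗ[ℂ] 𝒦)
  let C (i : Fin d) : (List (Fin d) →₀ H) →ₗ[ℂ] 𝒦 :=
    Finsupp.lsum ℂ fun α => (V (α ++ [i]) : H →ₗ[ℂ] 𝒦)
  have hspan : Submodule.span ℂ {y : 𝒦 | ∃ α h, V α h = y} ≤ LinearMap.range A := by
    refine Submodule.span_le.mpr ?_
    rintro _ ⟨α, u, rfl⟩
    exact ⟨Finsupp.single α u, by simp [A]⟩
  have hA : DenseRange A := hmin.mono (LinearMap.coe_range A ▸ hspan)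
  have hC : ∀ f, ∑ i, ‖C i f‖ ^ 2 ≤ ‖A f‖ ^ 2 := by
    intro f
    obtain ⟨N, α, u, hf⟩ := f.exists_fin_sum_eq (E := 𝒦)
    simpa only [A, C, Finsupp.lsum_apply, ContinuousLinearMap.coe_coe, hf] using hV N α u
  obtain ⟨B, hBA, hB⟩ := exists_sum_norm_sq_le_of_denseRange A hA C hC
  refine ⟨B, fun i α u => by simpa [A, C] using hBA i (Finsupp.single α u), fun x => ?_⟩
  rw [inner_one_sub_sum_adjoint_comp_self, Complex.zero_le_real, sub_nonneg]
  exact hB x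

theorem sum_norm_sq_le_of_shift_operators (B : Fin d → 𝒦 →L[ℂ] 𝒦)
    (hBV : ∀ (i : Fin d) (α : List (Fin d)) (u : H), B i (V α u) = V (α ++ [i]) u)
    (hB : ∀ x : 𝒦, 0 ≤ ⟪x, ((1 : 𝒦 →L[ℂ] 𝒦) - ∑ i, ContinuousLinearMap.adjoint (B i) ∘L B i) x⟫)
    {N : ℕ} (α : Fin N → List (Fin d)) (u : Fin N → H) :
    ∑ i : Fin d, ‖∑ j, V (α j ++ [i]) (u j)‖ ^ 2 ≤ ‖∑ j, V (α j) (u j)‖ ^ 2 := by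
  have h := hB (∑ j, V (α j) (u j))
  rw [inner_one_sub_sum_adjoint_comp_self, Complex.zero_le_real, sub_nonneg] at h
  simpa only [map_sum, hBV] using h

variable [CompleteSpace H]

theorem sum_inner_sub_shiftedKernel
    (hdec : ∀ α β, K α β = ContinuousLinearMap.adjoint (V α) ∘L V β)
    {N : ℕ} (α : Fin N → List (Fin d)) (u : Fin N → H) :
    ∑ j, ∑ k, ⟪u j, (K (α j) (α k) - ∑ i : Fin d, K (α j ++ [i]) (α k ++ [i])) (u k)⟫
      = ((‖∑ j, V (α j) (u j)‖ ^ 2 - ∑ i : Fin d, ‖∑ j, V (α j ++ [i]) (u j)‖ ^ 2 : ℝ) : ℂ) := by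
  have hquad : ∀ W : List (Fin d) → H →L[ℂ] 𝒦, ∑ j, ∑ k, ⟪u j, (ContinuousLinearMap.adjoint
      (W (α j)) ∘L W (α k)) (u k)⟫ = ((‖∑ j, W (α j) (u j)‖ ^ 2 : ℝ) : ℂ) := fun W =>
    sum_inner_adjoint_comp_eq_norm_sq W α u
  simp only [hdec, sub_apply, sum_apply, inner_sub_right, inner_sum, Finset.sum_sub_distrib]
  rw [Complex.ofReal_sub, Complex.ofReal_sum, ← hquad V,
    ← Finset.sum_congr rfl fun i _ => hquad fun β => V (β ++ [i])]
  exact congrArg _ ((Finset.sum_congr rfl fun _ _ => Finset.sum_comm).trans Finset.sum_comm)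

theorem isPDKernel_sub_shiftedKernel_iff
    (hdec : ∀ α β, K α β = ContinuousLinearMap.adjoint (V α) ∘L V β) :
    IsPDKernel (fun α β => K α β - ∑ i : Fin d, K (α ++ [i]) (β ++ [i]))
      ↔ ∀ (N : ℕ) (α : Fin N → List (Fin d)) (u : Fin N → H),
          ∑ i : Fin d, ‖∑ j, V (α j ++ [i]) (u j)‖ ^ 2 ≤ ‖∑ j, V (α j) (u j)‖ ^ 2 := by
  refine forall₃_congr fun N α u => ?_
  rw [sum_inner_sub_shiftedKernel hdec, Complex.zero_le_real, sub_nonneg]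

end ShiftedKernel

theorem stmt10_general {d : ℕ} {H 𝒦 : Type*} [NormedAddCommGroup H]
    [InnerProductSpace ℂ H] [CompleteSpace H]
    [NormedAddCommGroup 𝒦] [InnerProductSpace ℂ 𝒦] [CompleteSpace 𝒦]
    (K : List (Fin d) → List (Fin d) → H →L[ℂ] H)
    (V : List (Fin d) → H →L[ℂ] 𝒦)
    (hdec : ∀ α β, K α β = ContinuousLinearMap.adjoint (V α) ∘L V β)
    (hmin : Dense (Submodule.span ℂ {y : 𝒦 | ∃ α h, V α h = y} : Set 𝒦)) :
    (IsPDKernel (fun α β => K α β - ∑ i : Fin d, K (α ++ [i]) (β ++ [i]))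
      ↔ ∀ (N : ℕ) (α : Fin N → List (Fin d)) (u : Fin N → H),
          ∑ i : Fin d, ‖∑ j, V (α j ++ [i]) (u j)‖ ^ 2 ≤ ‖∑ j, V (α j) (u j)‖ ^ 2)
    ∧ ((∀ (N : ℕ) (α : Fin N → List (Fin d)) (u : Fin N → H),
          ∑ i : Fin d, ‖∑ j, V (α j ++ [i]) (u j)‖ ^ 2 ≤ ‖∑ j, V (α j) (u j)‖ ^ 2)
      ↔ ∃ B : Fin d → 𝒦 →L[ℂ] 𝒦,
          (∀ (i : Fin d) (α : List (Fin d)) (u : H), B i (V α u) = V (α ++ [i]) u) ∧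
          ∀ x : 𝒦, 0 ≤ ⟪x, ((1 : 𝒦 →L[ℂ] 𝒦)
            - ∑ i, ContinuousLinearMap.adjoint (B i) ∘L B i) x⟫) :=
  ⟨isPDKernel_sub_shiftedKernel_iff hdec,
    exists_shift_operators_of_sum_norm_sq_le hmin,
    fun ⟨B, hBV, hB⟩ _ => sum_norm_sq_le_of_shift_operators B hBV hB⟩

/-- For a positive definite kernel `K` on `F_d^+` with minimal Kolmogorov
decomposition `K(α,β) = V(α)* V(β)`, the following are equivalent: (1) `K_Σ ≤ K`;
(2) `∑_i ‖∑_j V(α_j i) u_j‖² ≤ ‖∑_j V(α_j) u_j‖²` for all finite families; (3) there exist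
bounded shift operators `B_i` with `B_i V(α) u = V(αi) u` and `∑ B_i* B_i ≤ I`. -/
theorem stmt10 {d : ℕ} (hd : 1 ≤ d) {H 𝒦 : Type*} [NormedAddCommGroup H]
    [InnerProductSpace ℂ H] [CompleteSpace H]
    [NormedAddCommGroup 𝒦] [InnerProductSpace ℂ 𝒦] [CompleteSpace 𝒦]
    (K : List (Fin d) → List (Fin d) → H →L[ℂ] H) (hK : IsPDKernel K)
    (V : List (Fin d) → H →L[ℂ] 𝒦)
    (hdec : ∀ α β, K α β = ContinuousLinearMap.adjoint (V α) ∘L V β)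
    (hmin : Dense (Submodule.span ℂ {y : 𝒦 | ∃ α h, V α h = y} : Set 𝒦)) :
    (IsPDKernel (fun α β => K α β - ∑ i : Fin d, K (α ++ [i]) (β ++ [i]))
      ↔ ∀ (N : ℕ) (α : Fin N → List (Fin d)) (u : Fin N → H),
          ∑ i : Fin d, ‖∑ j, V (α j ++ [i]) (u j)‖ ^ 2 ≤ ‖∑ j, V (α j) (u j)‖ ^ 2)
    ∧ ((∀ (N : ℕ) (α : Fin N → List (Fin d)) (u : Fin N → H),
          ∑ i : Fin d, ‖∑ j, V (α j ++ [i]) (u j)‖ ^ 2 ≤ ‖∑ j, V (α j) (u j)‖ ^ 2)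
      ↔ ∃ B : Fin d → 𝒦 →L[ℂ] 𝒦,
          (∀ (i : Fin d) (α : List (Fin d)) (u : H), B i (V α u) = V (α ++ [i]) u) ∧
          ∀ x : 𝒦, 0 ≤ ⟪x, ((1 : 𝒦 →L[ℂ] 𝒦)
            - ∑ i, ContinuousLinearMap.adjoint (B i) ∘L B i) x⟫) :=
  stmt10_general K V hdec hmin
end

section
/- Let N ≥ 1 and let P_1, …, P_R ∈ M_N(ℂ) be nonzero orthogonal projections (P_r* = P_r = P_r²) with P_r P_s = 0 for r ≠ s and Σ_{r=1}^R P_r = I_N; write k_r for the rank of P_r. Let (Ω, P) be a probability space and A : Ω → M_N(ℂ) a measurable random matrix such that ω ↦ A(ω)^m (A(ω)^n)* is Bochner integrable for all m, n. Assume block-bi-unitary invariance: for all unitaries U, V ∈ U(N) that commute with every P_r, the law of ω ↦ U A(ω) V equals the law of A. Then for m ≠ n, E_B(E[A^m (A^n)*]) = 0, and for every m, E_B(E[A^m (A^m)*]) = Σ_{r=1}^R c_m^{(r)} P_r, where E_B(T) := Σ_{r=1}^R P_r T P_r and c_m^{(r)} := (1/k_r) Tr(P_r E[A^m (A^m)*]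 P_r) ≥ 0. -/
/-!
Multiplying `A` by a phase `θ` multiplies `E[A^m (A^n)*]` by `θ^m θ̄^n`, so for `m ≠ n` a phase
with `θ^(m-n) = -1` shows that this moment vanishes. Conjugating `A` by a block unitary `U`
conjugates `M = E[A^m (A^m)*]` by `U`, so `M` commutes with every block unitary, in particular
with the reflection `1 - 2 x x*/‖x‖²` for `x` in the range of `P_r`. Hence every vector of that
range is an eigenvector of `M`, so `M` is a scalar `c` there and `P_r M P_r = c P_r`, with
`c = Tr(P_r M P_r) / rank P_r`; the trace is nonnegative since `M` averages positive
semidefinite matrices.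
-/

open MeasureTheory
open scoped ComplexOrder Matrix

noncomputable instance {m n α : Type*} [MeasurableSpace α] : MeasurableSpace (Matrix m n α) :=
  inferInstanceAs (MeasurableSpace (m → n → α))

attribute [local instance] Matrix.normedAddCommGroup Matrix.normedSpace

theorem Commute.of_two_mul_sub_one {R : Type*} [Ring R] [Algebra ℚ R] {a p : R}
    (h : Commute a (2 * p - 1)) : Commute a p := by
  have hp : p = (2⁻¹ : ℚ) • (2 * p - 1 + 1) := by
    rw [sub_add_cancel, two_mul, ← two_smul ℚ p, smul_smul, inv_mul_cancel₀ two_ne_zero, one_smul]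
  rw [hp]
  exact (h.add_right (Commute.one_right a)).smul_right _

theorem LinearMap.exists_forall_mem_eq_smul_of_forall_mem_exists_eq_smul {K V : Type*} [Field K]
    [AddCommGroup V] [Module K V] {f : V →ₗ[K] V} {W : Submodule K V}
    (h : ∀ v ∈ W, ∃ μ : K, f v = μ • v) : ∃ c : K, ∀ v ∈ W, f v = c • v := by
  have hW : ∀ v ∈ W, f v ∈ W := fun v hv => by
    obtain ⟨μ, hμ⟩ := h v hv
    rw [hμ]
    exact W.smul_mem μ hv
  obtain ⟨c, hc⟩ := (f.restrict hW).exists_eq_smul_id_of_forall_notLinearIndependent fun v => by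
    obtain ⟨μ, hμ⟩ := h v v.2
    rw [LinearIndependent.pair_iff]
    push Not
    refine ⟨μ, -1, Subtype.ext ?_, by simp⟩
    simp [LinearMap.coe_restrict_apply, hμ]
  exact ⟨c, fun v hv => congrArg Subtype.val (LinearMap.congr_fun hc ⟨v, hv⟩)⟩

namespace Matrix

variable {n : Type*} [Fintype n] {𝕜 : Type*} [RCLike 𝕜]

noncomputable def lineProjection (x : n → 𝕜) : Matrix n n 𝕜 :=
  (star x ⬝ᵥ x)⁻¹ • vecMulVec x (star x)

theorem lineProjection_mulVec (x y : n → 𝕜) :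
    lineProjection x *ᵥ y = ((star x ⬝ᵥ x)⁻¹ * (star x ⬝ᵥ y)) • x := by
  rw [lineProjection, smul_mulVec, vecMulVec_mulVec, op_smul_eq_smul, smul_smul]

theorem lineProjection_mulVec_self {x : n → 𝕜} (hx : x ≠ 0) : lineProjection x *ᵥ x = x := by
  rw [lineProjection_mulVec, inv_mul_cancel₀ (dotProduct_star_self_eq_zero.not.2 hx), one_smul]

theorem isStarProjection_lineProjection (x : n → 𝕜) : IsStarProjection (lineProjection x) := by
  set d := star x ⬝ᵥ x
  refine ⟨?_, ?_⟩
  · have hd : d⁻¹ * d⁻¹ * d = d⁻¹ := by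
      rw [mul_right_comm]
      simpa only [inv_inv] using mul_inv_mul_cancel d⁻¹
    rw [IsIdempotentElem, lineProjection, smul_mul_smul, vecMulVec_mul_vecMulVec, vecMulVec_smul,
      smul_smul, hd]
  · have hS : IsSelfAdjoint (vecMulVec x (star x)) := by
      rw [IsSelfAdjoint, star_eq_conjTranspose, conjTranspose_vecMulVec, star_star]
    have hd : IsSelfAdjoint d := (star_dotProduct x x).symm
    exact hd.inv₀.smul hS

theorem commute_lineProjection {P : Matrix n n 𝕜} (hP : Pᴴ = P) {x : n → 𝕜} {c : 𝕜}
    (hc : star c = c) (hx : P *ᵥ x = c • x) : Commute P (lineProjection x) := by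
  have hxP : star x ᵥ* P = c • star x := by
    rw [← hP, vecMul_conjTranspose, star_star, hx, star_smul, hc]
  rw [lineProjection, Commute, SemiconjBy, mul_smul_comm, smul_mul_assoc, mul_vecMulVec,
    vecMulVec_mul, hx, hxP, smul_vecMulVec, vecMulVec_smul]

theorem exists_mulVec_eq_smul_of_commute_lineProjection {M : Matrix n n 𝕜} {x : n → 𝕜}
    (h : Commute M (lineProjection x)) : ∃ μ : 𝕜, M *ᵥ x = μ • x := by
  rcases eq_or_ne x 0 with rfl | hx
  · exact ⟨0, by simp⟩
  · refine ⟨(star x ⬝ᵥ x)⁻¹ * (star x ⬝ᵥ (M *ᵥ x)), ?_⟩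
    rw [← lineProjection_mulVec, mulVec_mulVec, ← h.eq, ← mulVec_mulVec,
      lineProjection_mulVec_self hx]

variable [DecidableEq n]

theorem trace_eq_rank_of_isIdempotentElem {K : Type*} [Field K] {Q : Matrix n n K}
    (hQ : IsIdempotentElem Q) : Q.trace = Q.rank := by
  have hQ' : IsIdempotentElem (toLin' Q) := hQ.map toLinAlgEquiv'
  rw [← trace_toLin'_eq, (LinearMap.IsIdempotentElem.isProj_range _ hQ').trace]
  rfl

theorem eq_rank_inv_mul_trace_smul {K : Type*} [Field K] [CharZero K] {Q B : Matrix n n K}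
    (hQ : IsIdempotentElem Q) {c : K} (hB : B = c • Q) :
    B = ((Q.rank : K)⁻¹ * B.trace) • Q := by
  rcases eq_or_ne Q.rank 0 with h0 | h0
  · have hQ' : IsIdempotentElem (toLin' Q) := hQ.map toLinAlgEquiv'
    have hQ0 : Q = 0 := by
      rw [← map_eq_zero_iff _ toLin'.injective,
        ← LinearMap.IsIdempotentElem.trace_eq_zero_iff hQ', trace_toLin'_eq,
        trace_eq_rank_of_isIdempotentElem hQ, h0, Nat.cast_zero]
    simp [hB, hQ0]
  · rw [hB, trace_smul, trace_eq_rank_of_isIdempotentElem hQ, smul_eq_mul, mul_comm c,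
      inv_mul_cancel_left₀ (Nat.cast_ne_zero.2 h0 : (Q.rank : K) ≠ 0)]

theorem smul_one_mem_unitary {θ : 𝕜} (hθ : ‖θ‖ = 1) :
    θ • (1 : Matrix n n 𝕜) ∈ unitary (Matrix n n 𝕜) :=
  Unitary.smul_mem_of_mem (by simp [Unitary.mem_iff, RCLike.conj_mul, RCLike.mul_conj, hθ])
    (one_mem _)

theorem exists_mul_mul_eq_smul_of_forall_commute {ι : Type*} {P : ι → Matrix n n 𝕜}
    (hherm : ∀ r, (P r)ᴴ = P r) (hidem : ∀ r, P r * P r = P r)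
    (horth : ∀ r s, r ≠ s → P r * P s = 0) {M : Matrix n n 𝕜}
    (hM : ∀ U ∈ unitary (Matrix n n 𝕜), (∀ s, Commute U (P s)) → Commute M U) (r : ι) :
    ∃ c : 𝕜, P r * M * P r = c • P r := by
  have heig : ∀ x, P r *ᵥ x = x → ∃ μ : 𝕜, M *ᵥ x = μ • x := by
    intro x hx
    have hQ : ∀ s, Commute (lineProjection x) (P s) := fun s => by
      refine Commute.symm ?_
      rcases eq_or_ne s r with rfl | hsr
      · exact commute_lineProjection (hherm s) (star_one 𝕜) (by rw [one_smul, hx])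
      · refine commute_lineProjection (hherm s) (star_zero 𝕜) ?_
        rw [zero_smul, ← hx, mulVec_mulVec, horth s r hsr, zero_mulVec]
    have hU : Commute M (2 * lineProjection x - 1) :=
      hM _ (isStarProjection_lineProjection x).two_mul_sub_one_mem_unitary fun s =>
        ((Commute.ofNat_left 2 _).mul_left (hQ s)).sub_left (Commute.one_left _)
    exact exists_mulVec_eq_smul_of_commute_lineProjection hU.of_two_mul_sub_one
  obtain ⟨c, hc⟩ := (toLin' M).exists_forall_mem_eq_smul_of_forall_mem_exists_eq_smul
    (W := LinearMap.range (toLin' (P r))) (by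
      rintro _ ⟨w, rfl⟩
      exact heig _ (by rw [toLin'_apply, mulVec_mulVec, hidem]))
  have hMP : M * P r = c • P r := toLin'.injective <| LinearMap.ext fun w => by
    simpa [toLin'_mul, mulVec_mulVec] using hc _ ⟨w, rfl⟩
  exact ⟨c, by rw [Matrix.mul_assoc, hMP, mul_smul_comm, hidem]⟩

end Matrix

-- The sup-norm topology of `Matrix.normedAddCommGroup` is the product topology, but not
-- reducibly so: Borel instances are needed for both, and integrability refers to the former.
instance {m n 𝕜 : Type*} [Fintype m] [Fintype n] [RCLike 𝕜] : BorelSpace (Matrix m n 𝕜) :=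
  Pi.borelSpace

instance {m n 𝕜 : Type*} [Fintype m] [Fintype n] [RCLike 𝕜] :
    @BorelSpace (Matrix m n 𝕜)
      (PseudoMetricSpace.toUniformSpace (α := Matrix m n 𝕜)).toTopologicalSpace _ :=
  Pi.borelSpace

namespace Matrix

variable {n : Type*} [Fintype n] [DecidableEq n] {𝕜 : Type*} [RCLike 𝕜]
  {Ω : Type*} [MeasurableSpace Ω]

noncomputable def mixedMoment (P : Measure Ω) (A : Ω → Matrix n n 𝕜) (m k : ℕ) : Matrix n n 𝕜 :=
  ∫ ω, A ω ^ m * (A ω ^ k)ᴴ ∂P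

variable {P : Measure Ω}

section

variable {A : Ω → Matrix n n 𝕜}

theorem mixedMoment_congr_of_map_eq {B : Ω → Matrix n n 𝕜} (hA : Measurable A)
    (hB : Measurable B) (hlaw : P.map B = P.map A) (m k : ℕ) :
    mixedMoment P B m k = mixedMoment P A m k := by
  have hF : Continuous fun X : Matrix n n 𝕜 => X ^ m * (X ^ k)ᴴ :=
    (continuous_pow m).mul (continuous_pow k).matrix_conjTranspose
  exact (ProbabilityTheory.IdentDistrib.mk hB.aemeasurable hA.aemeasurable hlaw).comp
    hF.measurable |>.integral_eq

theorem mixedMoment_smul (θ : 𝕜) (m k : ℕ) :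
    mixedMoment P (fun ω => θ • A ω) m k = (θ ^ m * star θ ^ k) • mixedMoment P A m k := by
  simp_rw [mixedMoment, smul_pow, conjTranspose_smul, smul_mul_smul, star_pow]
  exact integral_smul _ _

theorem mixedMoment_conj {U : Matrix n n 𝕜} (hU : U ∈ unitary (Matrix n n 𝕜)) (m k : ℕ) :
    mixedMoment P (fun ω => U * A ω * star U) m k = U * mixedMoment P A m k * star U := by
  let φ := Unitary.conjStarAlgAut 𝕜 (Matrix n n 𝕜) ⟨U, hU⟩
  have hφ (X : Matrix n n 𝕜) :
      (U * X * star U) ^ m * ((U * X * star U) ^ k)ᴴ = φ (X ^ m * (X ^ k)ᴴ) := by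
    simp only [← star_eq_conjTranspose, map_mul, map_pow, map_star, φ,
      Unitary.conjStarAlgAut_apply]
  simp only [mixedMoment, hφ]
  exact φ.toAlgEquiv.toLinearEquiv.toContinuousLinearEquiv.integral_comp_comm _

theorem commute_mixedMoment_of_map_conj_eq (hA : Measurable A) {U : Matrix n n 𝕜}
    (hU : U ∈ unitary (Matrix n n 𝕜)) (hlaw : P.map (fun ω => U * A ω * star U) = P.map A)
    (m k : ℕ) : Commute (mixedMoment P A m k) U := by
  have hmeas : Measurable fun ω => U * A ω * star U :=
    ((continuous_const.mul continuous_id).mul continuous_const).measurable.comp hA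
  have h := mixedMoment_congr_of_map_eq hA hmeas hlaw m k
  rw [mixedMoment_conj hU] at h
  calc mixedMoment P A m k * U = U * mixedMoment P A m k * star U * U := by rw [h]
    _ = U * mixedMoment P A m k := by rw [mul_assoc, Unitary.star_mul_self_of_mem hU, mul_one]

theorem trace_mul_mixedMoment_mul_conjTranspose_nonneg {m : ℕ}
    (hint : @Integrable _ _ SeminormedAddGroup.toContinuousENorm _ _
      (fun ω => A ω ^ m * (A ω ^ m)ᴴ) P) (B : Matrix n n 𝕜) :
    0 ≤ (B * mixedMoment P A m m * Bᴴ).trace := by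
  let L : Matrix n n 𝕜 →ₗ[𝕜] 𝕜 :=
    traceLinearMap n 𝕜 𝕜 ∘ₗ LinearMap.mulRight 𝕜 Bᴴ ∘ₗ LinearMap.mulLeft 𝕜 B
  have hL : ∫ ω, L (A ω ^ m * (A ω ^ m)ᴴ) ∂P = L (mixedMoment P A m m) :=
    L.toContinuousLinearMap.integral_comp_comm hint
  have hpsd (X : Matrix n n 𝕜) : 0 ≤ L (X * Xᴴ) := by
    simpa [L, Matrix.mul_assoc, conjTranspose_mul] using
      (posSemidef_self_mul_conjTranspose (B * X)).trace_nonneg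
  rw [← show L (mixedMoment P A m m) = (B * mixedMoment P A m m * Bᴴ).trace from rfl, ← hL]
  exact integral_nonneg fun ω => hpsd _

end

theorem mixedMoment_eq_zero_of_ne {A : Ω → Matrix n n ℂ} (hA : Measurable A)
    (hlaw : ∀ θ : ℂ, ‖θ‖ = 1 → P.map (fun ω => θ • A ω) = P.map A) {m k : ℕ} (hmk : m ≠ k) :
    mixedMoment P A m k = 0 := by
  have hmk' : ((m : ℂ) - k) ≠ 0 := sub_ne_zero.2 (Nat.cast_injective.ne hmk)
  set θ := Complex.exp ((Real.pi / (m - k) : ℝ) * Complex.I)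
  have hθ : θ ^ m * star θ ^ k = -1 := by
    rw [Complex.star_def, ← Complex.exp_conj, ← Complex.exp_nat_mul, ← Complex.exp_nat_mul,
      ← Complex.exp_add, ← Complex.exp_pi_mul_I]
    congr 1
    simp only [map_mul, Complex.conj_ofReal, Complex.conj_I]
    push_cast
    field_simp
    ring
  have hmeas : Measurable fun ω => θ • A ω := (continuous_const_smul θ).measurable.comp hA
  have h := mixedMoment_congr_of_map_eq hA hmeas (hlaw θ (Complex.norm_exp_ofReal_mul_I _)) m k
  rwa [mixedMoment_smul, hθ, neg_one_smul, neg_eq_iff_add_eq_zero, ← two_smul ℂ,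
    smul_eq_zero_iff_right two_ne_zero] at h

end Matrix

theorem stmt14_general {N : ℕ} {R : ℕ}
    (Pr : Fin R → Matrix (Fin N) (Fin N) ℂ)
    (hherm : ∀ r, (Pr r)ᴴ = Pr r) (hidem : ∀ r, Pr r * Pr r = Pr r)
    (horth : ∀ r s, r ≠ s → Pr r * Pr s = 0)
    {Ω : Type*} [MeasurableSpace Ω] (P : Measure Ω)
    (A : Ω → Matrix (Fin N) (Fin N) ℂ) (hmeas : Measurable A)
    (hint : ∀ m n : ℕ, @Integrable _ _ SeminormedAddGroup.toContinuousENorm _ _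
      (fun ω => A ω ^ m * (A ω ^ n)ᴴ) P)
    (hinv : ∀ U V : Matrix.unitaryGroup (Fin N) ℂ,
      (∀ r, (U : Matrix (Fin N) (Fin N) ℂ) * Pr r = Pr r * (U : Matrix (Fin N) (Fin N) ℂ)) →
      (∀ r, (V : Matrix (Fin N) (Fin N) ℂ) * Pr r = Pr r * (V : Matrix (Fin N) (Fin N) ℂ)) →
      Measure.map (fun ω => (U : Matrix (Fin N) (Fin N) ℂ) * A ω
        * (V : Matrix (Fin N) (Fin N) ℂ)) P = Measure.map A P) :
    (∀ m n : ℕ, m ≠ n →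
      (∑ r, Pr r * (∫ ω, A ω ^ m * (A ω ^ n)ᴴ ∂P) * Pr r) = 0) ∧
    (∀ m : ℕ,
      (∑ r, Pr r * (∫ ω, A ω ^ m * (A ω ^ m)ᴴ ∂P) * Pr r)
        = ∑ r, (((Pr r).rank : ℂ)⁻¹
            * (Pr r * (∫ ω, A ω ^ m * (A ω ^ m)ᴴ ∂P) * Pr r).trace) • Pr r
      ∧ ∀ r, 0 ≤ ((Pr r).rank : ℂ)⁻¹
            * (Pr r * (∫ ω, A ω ^ m * (A ω ^ m)ᴴ ∂P) * Pr r).trace) := by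
  have hphase (θ : ℂ) (hθ : ‖θ‖ = 1) : P.map (fun ω => θ • A ω) = P.map A := by
    simpa using hinv ⟨θ • 1, Matrix.smul_one_mem_unitary hθ⟩ 1 (fun r => by simp) (fun r => by simp)
  have hconj (U : Matrix (Fin N) (Fin N) ℂ) (hU : U ∈ unitary _) (hUP : ∀ s, Commute U (Pr s)) :
      P.map (fun ω => U * A ω * star U) = P.map A := by
    refine hinv ⟨U, hU⟩ ⟨star U, Unitary.star_mem hU⟩ hUP fun s => ?_
    have h := (hUP s).star_star
    rwa [Matrix.star_eq_conjTranspose (Pr s), hherm s] at h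
  have hblock (m : ℕ) (r : Fin R) : ∃ c : ℂ, Pr r * Matrix.mixedMoment P A m m * Pr r = c • Pr r :=
    Matrix.exists_mul_mul_eq_smul_of_forall_commute hherm hidem horth (fun U hU hUP =>
      Matrix.commute_mixedMoment_of_map_conj_eq hmeas hU (hconj U hU hUP) m m) r
  refine ⟨fun m k hmk => ?_, fun m => ⟨Finset.sum_congr rfl fun r _ => ?_, fun r => ?_⟩⟩
  · rw [show (∫ ω, A ω ^ m * (A ω ^ k)ᴴ ∂P) = 0 from
      Matrix.mixedMoment_eq_zero_of_ne hmeas hphase hmk]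
    simp
  · obtain ⟨c, hc⟩ := hblock m r
    exact Matrix.eq_rank_inv_mul_trace_smul (hidem r) hc
  · refine mul_nonneg (inv_nonneg.2 (Nat.cast_nonneg _)) ?_
    have h := Matrix.trace_mul_mixedMoment_mul_conjTranspose_nonneg (hint m m) (Pr r)
    rwa [hherm r] at h

/-- blockwise diagonalization. For a block-bi-unitarily invariant random
matrix `A` and the conditional expectation `E_B(T) = ∑_r P_r T P_r` onto the block-diagonal
algebra, one has `E_B(E[A^m (A^n)*]) = 0` for `m ≠ n` and
`E_B(E[A^m (A^m)*]) = ∑_r c_m^{(r)} P_r` with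
`c_m^{(r)} = (1/k_r) Tr(P_r E[A^m (A^m)*] P_r) ≥ 0`, where `k_r = rank P_r`. -/
theorem stmt14 {N : ℕ} (hN : 1 ≤ N) {R : ℕ}
    (Pr : Fin R → Matrix (Fin N) (Fin N) ℂ)
    (hherm : ∀ r, (Pr r)ᴴ = Pr r) (hidem : ∀ r, Pr r * Pr r = Pr r)
    (hne : ∀ r, Pr r ≠ 0)
    (horth : ∀ r s, r ≠ s → Pr r * Pr s = 0)
    (hsum : (∑ r, Pr r) = 1)
    {Ω : Type*} [MeasurableSpace Ω] (P : Measure Ω) [IsProbabilityMeasure P]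
    (A : Ω → Matrix (Fin N) (Fin N) ℂ) (hmeas : Measurable A)
    (hint : ∀ m n : ℕ, @Integrable _ _ SeminormedAddGroup.toContinuousENorm _ _
      (fun ω => A ω ^ m * (A ω ^ n)ᴴ) P)
    (hinv : ∀ U V : Matrix.unitaryGroup (Fin N) ℂ,
      (∀ r, (U : Matrix (Fin N) (Fin N) ℂ) * Pr r = Pr r * (U : Matrix (Fin N) (Fin N) ℂ)) →
      (∀ r, (V : Matrix (Fin N) (Fin N) ℂ) * Pr r = Pr r * (V : Matrix (Fin N) (Fin N) ℂ)) →
      Measure.map (fun ω => (U : Matrix (Fin N) (Fin N) ℂ) * A ω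
        * (V : Matrix (Fin N) (Fin N) ℂ)) P = Measure.map A P) :
    (∀ m n : ℕ, m ≠ n →
      (∑ r, Pr r * (∫ ω, A ω ^ m * (A ω ^ n)ᴴ ∂P) * Pr r) = 0) ∧
    (∀ m : ℕ,
      (∑ r, Pr r * (∫ ω, A ω ^ m * (A ω ^ m)ᴴ ∂P) * Pr r)
        = ∑ r, (((Pr r).rank : ℂ)⁻¹
            * (Pr r * (∫ ω, A ω ^ m * (A ω ^ m)ᴴ ∂P) * Pr r).trace) • Pr r
      ∧ ∀ r, 0 ≤ ((Pr r).rank : ℂ)⁻¹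
            * (Pr r * (∫ ω, A ω ^ m * (A ω ^ m)ᴴ ∂P) * Pr r).trace) :=
  stmt14_general Pr hherm hidem horth P A hmeas hint hinv
end
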